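/- arXiv:1711.04470 — 6 statements merged into one kernel-verified Lean document; each statement's English description precedes it below -/
import Mathlib

section
/- For the weighted mean matrix a_{nv} = p_v/P_n, if (p_n) satisfies ∑_{n=1}^{m} P_n/n = O(P_m) as m → ∞, then ∑_{v=1}^{n−1} (1/v)·â_{n,v+1} = O(a_{nn}), i.e., there is a constant C with ∑_{v=1}^{n−1} (1/v)·p_n P_v/(P_n P_{n−1}) ≤ C·p_n/P_n for all n ≥ 2. -/
open Finset

/-- If ∑_{n=1}^m P_n/n = O(P_m), then for the weighted mean matrix,
    ∑_{v=1}^{n−1} (1/v) â_{n,v+1} = O(a_{nn}) = O(p_n/P_n). -/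
theorem weighted_mean_hat_sum_bound
    (p : ℕ → ℝ) (hp : ∀ n, 0 < p n)
    (P : ℕ → ℝ) (hP : ∀ n, P n = ∑ i ∈ Finset.range (n + 1), p i)
    (C₀ : ℝ) (hC₀ : ∀ m : ℕ, 1 ≤ m → ∑ n ∈ Finset.Icc 1 m, P n / n ≤ C₀ * P m) :
    ∃ C : ℝ, ∀ n : ℕ, 2 ≤ n →
      ∑ v ∈ Finset.Icc 1 (n - 1), (1 / (v : ℝ)) * (p n * P v / (P n * P (n - 1))) ≤
        C * (p n / P n) := by
  have hPpos : ∀ n, 0 < P n := by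
    intro n
    rw [hP]
    exact Finset.sum_pos (fun i _ => hp i) ⟨0, by simp⟩
  refine ⟨C₀, fun n hn => ?_⟩
  have h1 : (1 : ℕ) ≤ n - 1 := by omega
  have key := hC₀ (n - 1) h1
  have hfac : ∑ v ∈ Finset.Icc 1 (n - 1), (1 / (v : ℝ)) * (p n * P v / (P n * P (n - 1)))
      = (p n / (P n * P (n - 1))) * ∑ v ∈ Finset.Icc 1 (n - 1), P v / v := by
    rw [Finset.mul_sum]
    apply Finset.sum_congr rfl
    intro v _
    field_simp
  rw [hfac]
  have hpos : 0 < p n / (P n * P (n - 1)) :=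
    div_pos (hp n) (mul_pos (hPpos n) (hPpos (n - 1)))
  calc (p n / (P n * P (n - 1))) * ∑ v ∈ Finset.Icc 1 (n - 1), P v / v
      ≤ (p n / (P n * P (n - 1))) * (C₀ * P (n - 1)) := by
        exact mul_le_mul_of_nonneg_left key hpos.le
    _ = C₀ * (p n / P n) := by
        have := (hPpos (n - 1)).ne'
        have := (hPpos n).ne'
        field_simp
end

section
/- (Lemma of Bor) Let (X_n) be a positive nondecreasing (or almost increasing) sequence and let (λ_n) be a sequence satisfying λ_m X_m = O(1) as m → ∞ and ∑_{n=1}^{m} n X_n |Δ²λ_n| = O(1) as m → ∞, where Δλ_n = λ_n − λ_{n+1} and Δ²λ_n = Δλ_n − Δλ_{n+1}. Then n X_n |Δλ_n| = O(1) as n → ∞ and ∑_{n=1}^{∞} X_n |Δλ_n| < ∞. -/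
open Finset

open Filter Topology

theorem bor_aux (X : ℕ → ℝ) (hXpos : ∀ n, 0 < X n) (hXmono : Monotone X)
    (d : ℕ → ℝ) (C₁ C₂ : ℝ)
    (hl : ∀ n, |∑ i ∈ Finset.range n, d i| ≤ C₁)
    (hg : ∀ m, ∑ j ∈ Finset.range m, (j : ℝ) * X j * |d j - d (j + 1)| ≤ C₂) :
    (∀ n : ℕ, (n : ℝ) * X n * |d n| ≤ C₂) ∧ Summable (fun n : ℕ => X n * |d n|) := by
  have hgnn : ∀ j : ℕ, (0:ℝ) ≤ (j : ℝ) * X j * |d j - d (j + 1)| := fun j =>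
    mul_nonneg (mul_nonneg (Nat.cast_nonneg _) (hXpos j).le) (abs_nonneg _)
  have hX1 : (0:ℝ) < X 1 := hXpos 1
  -- summability of |Δd|
  have hterm : ∀ j : ℕ, |d j - d (j + 1)| ≤
      ((j : ℝ) * X j * |d j - d (j + 1)|) / X 1 + (if j = 0 then |d 0 - d 1| else 0) := by
    intro j
    rcases Nat.eq_zero_or_pos j with hj | hj
    · subst hj; simp
    · have h1j : (1:ℝ) ≤ (j:ℝ) := by exact_mod_cast hj
      have hXj : X 1 ≤ X j := hXmono hj
      have hq : X 1 ≤ (j : ℝ) * X j := by nlinarith [hXpos 1, hXpos j]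
      have key : |d j - d (j + 1)| * X 1 ≤ (j : ℝ) * X j * |d j - d (j + 1)| := by
        rw [mul_comm]
        exact mul_le_mul_of_nonneg_right hq (abs_nonneg _)
      rw [if_neg (by omega), add_zero, le_div_iff₀ hX1]
      exact key
  have hDabs : Summable (fun j : ℕ => |d j - d (j + 1)|) := by
    apply summable_of_sum_range_le (c := C₂ / X 1 + |d 0 - d 1|) (fun n => abs_nonneg _)
    intro m
    calc ∑ j ∈ range m, |d j - d (j + 1)|
        ≤ ∑ j ∈ range m, (((j : ℝ) * X j * |d j - d (j + 1)|) / X 1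
            + (if j = 0 then |d 0 - d 1| else 0)) := sum_le_sum fun j _ => hterm j
      _ = (∑ j ∈ range m, (j : ℝ) * X j * |d j - d (j + 1)|) / X 1
            + ∑ j ∈ range m, (if j = 0 then |d 0 - d 1| else 0) := by
          rw [Finset.sum_add_distrib, Finset.sum_div]
      _ ≤ C₂ / X 1 + |d 0 - d 1| := by
          gcongr
          · exact hg m
          · rw [Finset.sum_ite_eq' (range m) 0 (fun _ => |d 0 - d 1|)]
            split_ifs <;> simp [abs_nonneg]
  have hDsum : Summable (fun j : ℕ => d j - d (j + 1)) := hDabs.of_abs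
  -- telescoping
  have htel : ∀ n : ℕ, ∑ i ∈ range n, (d i - d (i + 1)) = d 0 - d n :=
    fun n => Finset.sum_range_sub' d n
  -- d tends to a limit
  have hdlim : Tendsto d atTop (𝓝 (d 0 - ∑' i : ℕ, (d i - d (i + 1)))) := by
    have h := (tendsto_const_nhds (x := d 0) (f := atTop)).sub hDsum.hasSum.tendsto_sum_nat
    refine h.congr fun n => ?_
    rw [htel]; ring
  -- Cesàro : limit is 0
  have hL : d 0 - ∑' i : ℕ, (d i - d (i + 1)) = 0 := by
    have hces := hdlim.cesaro
    have hzero : Tendsto (fun n : ℕ => (n:ℝ)⁻¹ * ∑ i ∈ range n, d i) atTop (𝓝 0) := by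
      apply squeeze_zero_norm (a := fun n : ℕ => C₁ / (n:ℝ))
      · intro n
        rw [Real.norm_eq_abs, abs_mul, abs_inv, Nat.abs_cast, div_eq_inv_mul]
        exact mul_le_mul_of_nonneg_left (hl n) (by positivity)
      · exact tendsto_const_div_atTop_nhds_zero_nat C₁
    exact tendsto_nhds_unique hces hzero
  have hd0 : Tendsto d atTop (𝓝 0) := hL ▸ hdlim
  -- Ico telescoping
  have htel2 : ∀ n m : ℕ, n ≤ m → ∑ j ∈ Ico n m, (d j - d (j + 1)) = d n - d m := by
    intro n m h
    rw [Finset.sum_Ico_eq_sub _ h, htel, htel]; ring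
  have h5 : ∀ n m : ℕ, n ≤ m → |d n| ≤ ∑ j ∈ Ico n m, |d j - d (j + 1)| + |d m| := by
    intro n m h
    have h' : d n = ∑ j ∈ Ico n m, (d j - d (j + 1)) + d m := by rw [htel2 n m h]; ring
    calc |d n| = |∑ j ∈ Ico n m, (d j - d (j + 1)) + d m| := by rw [← h']
      _ ≤ |∑ j ∈ Ico n m, (d j - d (j + 1))| + |d m| := abs_add_le _ _
      _ ≤ ∑ j ∈ Ico n m, |d j - d (j + 1)| + |d m| := by
          gcongr; exact Finset.abs_sum_le_sum_abs _ _
  -- Part 1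
  have part1 : ∀ n : ℕ, (n : ℝ) * X n * |d n| ≤ C₂ := by
    intro n
    have key : ∀ m : ℕ, n ≤ m → (n : ℝ) * X n * |d n| ≤ C₂ + (n : ℝ) * X n * |d m| := by
      intro m hm
      have hnn : (0:ℝ) ≤ (n : ℝ) * X n := mul_nonneg (Nat.cast_nonneg _) (hXpos n).le
      have h6 : (n : ℝ) * X n * ∑ j ∈ Ico n m, |d j - d (j + 1)| ≤ C₂ := by
        rw [Finset.mul_sum]
        calc ∑ j ∈ Ico n m, (n : ℝ) * X n * |d j - d (j + 1)|
            ≤ ∑ j ∈ Ico n m, (j : ℝ) * X j * |d j - d (j + 1)| := by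
              apply sum_le_sum
              intro j hj
              have hnj : n ≤ j := (Finset.mem_Ico.mp hj).1
              have hc : ((n:ℝ)) ≤ (j:ℝ) := by exact_mod_cast hnj
              have hx : X n ≤ X j := hXmono hnj
              gcongr
              exact (hXpos n).le
          _ ≤ ∑ j ∈ range m, (j : ℝ) * X j * |d j - d (j + 1)| := by
              apply Finset.sum_le_sum_of_subset_of_nonneg
              · intro j hj
                simp only [Finset.mem_Ico, Finset.mem_range] at *
                omega
              · exact fun i _ _ => hgnn i
          _ ≤ C₂ := hg m
      calc (n : ℝ) * X n * |d n|
          ≤ (n : ℝ) * X n * (∑ j ∈ Ico n m, |d j - d (j + 1)| + |d m|) :=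
            mul_le_mul_of_nonneg_left (h5 n m hm) hnn
        _ = (n : ℝ) * X n * ∑ j ∈ Ico n m, |d j - d (j + 1)| + (n : ℝ) * X n * |d m| := by ring
        _ ≤ C₂ + (n : ℝ) * X n * |d m| := by linarith [h6]
    have hlim : Tendsto (fun m : ℕ => C₂ + (n : ℝ) * X n * |d m|) atTop (𝓝 C₂) := by
      have : Tendsto (fun m : ℕ => |d m|) atTop (𝓝 0) := by
        simpa using hd0.abs
      have := (tendsto_const_nhds (x := C₂) (f := atTop)).add
        ((tendsto_const_nhds (x := (n : ℝ) * X n) (f := atTop)).mul this)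
      simpa using this
    exact ge_of_tendsto hlim (Filter.eventually_atTop.mpr ⟨n, key⟩)
  refine ⟨part1, ?_⟩
  -- Part 2
  apply summable_of_sum_range_le
    (c := 2 * C₂ + X 0 * |d 0 - d 1| + C₂)
    (fun n => mul_nonneg (hXpos n).le (abs_nonneg _))
  intro m
  have swap : ∑ n ∈ range m, ∑ j ∈ Ico n m, X n * |d j - d (j + 1)|
      = ∑ j ∈ range m, ∑ n ∈ range (j + 1), X n * |d j - d (j + 1)| := by
    apply Finset.sum_comm'
    intro n j
    simp only [Finset.mem_range, Finset.mem_Ico]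
    omega
  have inner : ∀ j ∈ range m, ∑ n ∈ range (j + 1), X n * |d j - d (j + 1)|
      ≤ 2 * ((j : ℝ) * X j * |d j - d (j + 1)|) + (if j = 0 then X 0 * |d 0 - d 1| else 0) := by
    intro j _
    have step : ∑ n ∈ range (j + 1), X n * |d j - d (j + 1)|
        ≤ ((j : ℝ) + 1) * X j * |d j - d (j + 1)| := by
      calc ∑ n ∈ range (j + 1), X n * |d j - d (j + 1)|
          ≤ ∑ _n ∈ range (j + 1), X j * |d j - d (j + 1)| := by
            apply sum_le_sum
            intro i hi
            exact mul_le_mul_of_nonneg_right (hXmono (Nat.lt_succ_iff.mp (Finset.mem_range.mp hi))) (abs_nonneg _)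
        _ = ((j : ℝ) + 1) * X j * |d j - d (j + 1)| := by
            rw [Finset.sum_const, Finset.card_range]
            push_cast
            ring
    rcases Nat.eq_zero_or_pos j with hj | hj
    · subst hj
      simp only [if_pos rfl]
      simpa using step
    · rw [if_neg (by omega), add_zero]
      have h1j : (1:ℝ) ≤ (j:ℝ) := by exact_mod_cast hj
      refine step.trans ?_
      nlinarith [mul_nonneg (hXpos j).le (abs_nonneg (d j - d (j + 1))), h1j]
  calc ∑ n ∈ range m, X n * |d n|
      ≤ ∑ n ∈ range m, (∑ j ∈ Ico n m, X n * |d j - d (j + 1)| + X n * |d m|) := by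
        apply sum_le_sum
        intro n hn
        have h := h5 n m (Nat.le_of_lt (Finset.mem_range.mp hn))
        calc X n * |d n| ≤ X n * (∑ j ∈ Ico n m, |d j - d (j + 1)| + |d m|) :=
              mul_le_mul_of_nonneg_left h (hXpos n).le
          _ = ∑ j ∈ Ico n m, X n * |d j - d (j + 1)| + X n * |d m| := by
              rw [mul_add, Finset.mul_sum]
    _ = ∑ n ∈ range m, ∑ j ∈ Ico n m, X n * |d j - d (j + 1)|
          + ∑ n ∈ range m, X n * |d m| := Finset.sum_add_distrib
    _ ≤ (2 * C₂ + X 0 * |d 0 - d 1|) + C₂ := by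
        gcongr ?_ + ?_
        · rw [swap]
          calc ∑ j ∈ range m, ∑ n ∈ range (j + 1), X n * |d j - d (j + 1)|
              ≤ ∑ j ∈ range m, (2 * ((j : ℝ) * X j * |d j - d (j + 1)|)
                  + (if j = 0 then X 0 * |d 0 - d 1| else 0)) := sum_le_sum inner
            _ = 2 * ∑ j ∈ range m, (j : ℝ) * X j * |d j - d (j + 1)|
                  + ∑ j ∈ range m, (if j = 0 then X 0 * |d 0 - d 1| else 0) := by
                rw [Finset.sum_add_distrib, Finset.mul_sum]
            _ ≤ 2 * C₂ + X 0 * |d 0 - d 1| := by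
                gcongr ?_ + ?_
                · linarith [hg m]
                · rw [Finset.sum_ite_eq' (range m) 0 (fun _ => X 0 * |d 0 - d 1|)]
                  split_ifs <;> [exact le_refl _; exact mul_nonneg (hXpos 0).le (abs_nonneg _)]
        · calc ∑ n ∈ range m, X n * |d m| ≤ ∑ _n ∈ range m, X m * |d m| := by
                apply sum_le_sum
                intro i hi
                exact mul_le_mul_of_nonneg_right (hXmono (Nat.le_of_lt (Finset.mem_range.mp hi))) (abs_nonneg _)
            _ = (m : ℝ) * X m * |d m| := by
                rw [Finset.sum_const, Finset.card_range]; push_cast; ring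
            _ ≤ C₂ := part1 m
    _ = 2 * C₂ + X 0 * |d 0 - d 1| + C₂ := by ring

/-- Bor's lemma: if (X_n) is positive nondecreasing, λ_m X_m = O(1) and
    ∑ n X_n |Δ²λ_n| has bounded partial sums, then n X_n |Δλ_n| = O(1) and
    ∑ X_n |Δλ_n| < ∞. -/
theorem bor_lemma
    (X : ℕ → ℝ) (hXpos : ∀ n, 0 < X n) (hXmono : Monotone X)
    (l : ℕ → ℝ)
    (h1 : ∃ C : ℝ, ∀ m : ℕ, |l m * X m| ≤ C)
    (h2 : ∃ C : ℝ, ∀ m : ℕ,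
      ∑ n ∈ Finset.Icc 1 m,
        (n : ℝ) * X n * |(l n - l (n + 1)) - (l (n + 1) - l (n + 2))| ≤ C) :
    (∃ C : ℝ, ∀ n : ℕ, (n : ℝ) * X n * |l n - l (n + 1)| ≤ C) ∧
    Summable (fun n : ℕ => X n * |l n - l (n + 1)|) := by
  obtain ⟨C₁, h1⟩ := h1
  obtain ⟨C₂, h2⟩ := h2
  have hX0 : (0:ℝ) < X 0 := hXpos 0
  have hlb : ∀ n : ℕ, |l n| ≤ C₁ / X 0 := by
    intro n
    rw [le_div_iff₀ hX0]
    calc |l n| * X 0 ≤ |l n| * X n :=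
          mul_le_mul_of_nonneg_left (hXmono (Nat.zero_le n)) (abs_nonneg _)
      _ = |l n * X n| := by rw [abs_mul, abs_of_pos (hXpos n)]
      _ ≤ C₁ := h1 n
  have hl : ∀ n : ℕ, |∑ i ∈ Finset.range n, (l i - l (i + 1))| ≤ |l 0| + C₁ / X 0 := by
    intro n
    rw [Finset.sum_range_sub' l]
    calc |l 0 - l n| ≤ |l 0| + |l n| := abs_sub _ _
      _ ≤ |l 0| + C₁ / X 0 := by linarith [hlb n]
  have hg : ∀ m : ℕ, ∑ j ∈ Finset.range m,
      (j : ℝ) * X j * |(l j - l (j + 1)) - (l (j + 1) - l (j + 2))| ≤ C₂ := by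
    intro m
    calc ∑ j ∈ Finset.range m, (j : ℝ) * X j * |(l j - l (j + 1)) - (l (j + 1) - l (j + 2))|
        ≤ ∑ j ∈ insert 0 (Finset.Icc 1 m),
            (j : ℝ) * X j * |(l j - l (j + 1)) - (l (j + 1) - l (j + 2))| := by
          apply Finset.sum_le_sum_of_subset_of_nonneg
          · intro j hj
            simp only [Finset.mem_range, Finset.mem_insert, Finset.mem_Icc] at *
            omega
          · intro i _ _
            exact mul_nonneg (mul_nonneg (Nat.cast_nonneg _) (hXpos i).le) (abs_nonneg _)
      _ = 0 + ∑ j ∈ Finset.Icc 1 m, (j : ℝ) * X j * |(l j - l (j + 1)) - (l (j + 1) - l (j + 2))| := by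
          rw [Finset.sum_insert (by simp)]
          norm_num
      _ ≤ C₂ := by rw [zero_add]; exact h2 m
  obtain ⟨p1, p2⟩ := bor_aux X hXpos hXmono (fun n => l n - l (n + 1)) (|l 0| + C₁ / X 0) C₂ hl hg
  exact ⟨⟨C₂, p1⟩, p2⟩
end

section
/- (Main theorem, case k = 1, weighted mean) Let (X_n) be a positive sequence, (p_n) positive reals with P_n = ∑ p_i → ∞, and (λ_n) a sequence satisfying: λ_m X_m = O(1), ∑_{n=1}^m n X_n |Δ²λ_n| = O(1), ∑_{n=1}^m P_n/n = O(P_m), ∑_{n=1}^m (p_n/P_n)|t_n| = O(X_m), and ∑_{n=1}^m |t_n|/n = O(X_m), where t_n is the (C,1)-mean of (n a_n). Suppose also n X_n |Δλ_n| = O(1) and ∑ X_n |Δλ_n| < ∞. Then ∑_{n=1}^{∞} |T_n − T_{n−1}| < ∞, where T_n = (1/P_n) ∑_{v=0}^n p_v s_v and s_v are partial sums of ∑ a_n λ_n; i.e., ∑ a_n λ_n is summable |N̄, p_n|. -/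
open Finset

private lemma sum_shift (g : ℕ → ℝ) (m : ℕ) :
    ∑ i ∈ Finset.range m, g (i + 1) = ∑ j ∈ Finset.Icc 1 m, g j := by
  induction m with
  | zero => simp
  | succ n ih => rw [Finset.sum_range_succ, ih, Finset.sum_Icc_succ_top (by omega)]

private lemma telescope (u : ℕ → ℝ) (a b : ℕ) (h : a ≤ b + 1) :
    ∑ n ∈ Finset.Icc a b, (u n - u (n + 1)) = u a - u (b + 1) := by
  have e : Finset.Icc a b = Finset.Ico a (b + 1) := by rw [Finset.Ico_add_one_right_eq_Icc]
  rw [e, Finset.sum_Ico_eq_sub _ h, Finset.sum_range_sub' u, Finset.sum_range_sub' u]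
  ring

private lemma genBound (X a c : ℕ → ℝ) (C D : ℝ)
    (hX : ∀ v, 0 < X v) (ha : ∀ v, 0 ≤ a v) (hc : ∀ v, 0 ≤ c v)
    (hA : ∀ m, ∑ v ∈ Finset.Icc 1 m, a v ≤ C * X m)
    (hD : ∀ m, 1 ≤ m →
      (∑ j ∈ Finset.Icc 1 (m - 1), |c j - c (j + 1)| * X j) + c m * X m ≤ D) :
    ∀ m, ∑ v ∈ Finset.Icc 1 m, c v * a v ≤ C * D := by
  have hC : 0 ≤ C := by
    have h0 := hA 0
    simp at h0
    nlinarith [hX 0]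
  have hD0 : 0 ≤ D := by
    have h1 := hD 1 le_rfl
    simp at h1
    nlinarith [hX 1, hc 1]
  intro m
  rcases Nat.eq_zero_or_pos m with hm | hm
  · subst hm; simp; positivity
  · have key : ∀ v ∈ Finset.Icc 1 m,
        c v ≤ (∑ j ∈ Finset.Icc v (m - 1), |c j - c (j + 1)|) + c m := by
      intro v hv
      simp only [Finset.mem_Icc] at hv
      have htel : ∑ j ∈ Finset.Icc v (m - 1), (c j - c (j + 1))
          = c v - c ((m - 1) + 1) := telescope c v (m - 1) (by omega)
      have hm1 : (m - 1) + 1 = m := by omega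
      rw [hm1] at htel
      have : c v = (∑ j ∈ Finset.Icc v (m - 1), (c j - c (j + 1))) + c m := by
        rw [htel]; ring
      rw [this]
      gcongr with j hj
      exact le_abs_self _
    calc ∑ v ∈ Finset.Icc 1 m, c v * a v
        ≤ ∑ v ∈ Finset.Icc 1 m,
            (((∑ j ∈ Finset.Icc v (m - 1), |c j - c (j + 1)|) + c m) * a v) := by
          apply Finset.sum_le_sum
          intro v hv
          exact mul_le_mul_of_nonneg_right (key v hv) (ha v)
      _ = (∑ v ∈ Finset.Icc 1 m, ∑ j ∈ Finset.Icc v (m - 1), |c j - c (j + 1)| * a v)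
            + c m * ∑ v ∈ Finset.Icc 1 m, a v := by
          rw [Finset.mul_sum]
          rw [← Finset.sum_add_distrib]
          apply Finset.sum_congr rfl
          intro v _
          rw [add_mul, Finset.sum_mul]
      _ = (∑ j ∈ Finset.Icc 1 (m - 1), ∑ v ∈ Finset.Icc 1 j, |c j - c (j + 1)| * a v)
            + c m * ∑ v ∈ Finset.Icc 1 m, a v := by
          congr 1
          refine Finset.sum_comm' ?_
          intro x y
          simp only [Finset.mem_Icc]
          omega
      _ ≤ (∑ j ∈ Finset.Icc 1 (m - 1), |c j - c (j + 1)| * (C * X j)) + c m * (C * X m) := by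
          apply add_le_add
          · apply Finset.sum_le_sum
            intro j _
            rw [← Finset.mul_sum]
            exact mul_le_mul_of_nonneg_left (hA j) (abs_nonneg _)
          · exact mul_le_mul_of_nonneg_left (hA m) (hc m)
      _ = C * ((∑ j ∈ Finset.Icc 1 (m - 1), |c j - c (j + 1)| * X j) + c m * X m) := by
          rw [mul_add, Finset.mul_sum]
          congr 1
          · apply Finset.sum_congr rfl; intro j _; ring
          · ring
      _ ≤ C * D := mul_le_mul_of_nonneg_left (hD m hm) hC
set_option maxHeartbeats 1000000 in
/-- Main theorem in the case k = 1 for the weighted mean: under Bor-type conditions,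
    ∑ a_n λ_n is summable |N̄, p_n|. -/
theorem weighted_mean_summability_k_one
    (X : ℕ → ℝ) (hXpos : ∀ n, 0 < X n)
    (p : ℕ → ℝ) (hp : ∀ n, 0 < p n)
    (P : ℕ → ℝ) (hP : ∀ n, P n = ∑ i ∈ Finset.range (n + 1), p i)
    (hPtop : Filter.Tendsto P Filter.atTop Filter.atTop)
    (f l : ℕ → ℝ)
    (t : ℕ → ℝ) (ht : ∀ n, t n = (1 / ((n : ℝ) + 1)) * ∑ r ∈ Finset.Icc 1 n, (r : ℝ) * f r)
    (s : ℕ → ℝ) (hs : ∀ n, s n = ∑ r ∈ Finset.range (n + 1), f r * l r)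
    (T : ℕ → ℝ) (hT : ∀ n, T n = (1 / P n) * ∑ v ∈ Finset.range (n + 1), p v * s v)
    (h1 : ∃ C : ℝ, ∀ m : ℕ, |l m * X m| ≤ C)
    (h2 : ∃ C : ℝ, ∀ m : ℕ,
      ∑ n ∈ Finset.Icc 1 m,
        (n : ℝ) * X n * |(l n - l (n + 1)) - (l (n + 1) - l (n + 2))| ≤ C)
    (h3 : ∃ C : ℝ, ∀ m : ℕ, 1 ≤ m → ∑ n ∈ Finset.Icc 1 m, P n / n ≤ C * P m)
    (h4 : ∃ C : ℝ, ∀ m : ℕ, ∑ n ∈ Finset.Icc 1 m, (p n / P n) * |t n| ≤ C * X m)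
    (h5 : ∃ C : ℝ, ∀ m : ℕ, ∑ n ∈ Finset.Icc 1 m, |t n| / n ≤ C * X m)
    (h6 : ∃ C : ℝ, ∀ n : ℕ, (n : ℝ) * X n * |l n - l (n + 1)| ≤ C)
    (h7 : Summable (fun n : ℕ => X n * |l n - l (n + 1)|)) :
    Summable (fun n : ℕ => |T (n + 1) - T n|) := by
  obtain ⟨C1, hC1⟩ := h1
  obtain ⟨C2, hC2⟩ := h2
  obtain ⟨C4, hC4⟩ := h4
  obtain ⟨C5, hC5⟩ := h5
  obtain ⟨C6, hC6⟩ := h6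
  clear h3
  -- basics
  have hPpos : ∀ n, 0 < P n := by
    intro n; rw [hP]
    exact Finset.sum_pos (fun i _ => hp i) ⟨0, by simp⟩
  have hPsucc : ∀ n, P (n + 1) = P n + p (n + 1) := by
    intro n; rw [hP, hP, Finset.sum_range_succ]
  have ht0 : t 0 = 0 := by simp [ht]
  have hXnn : ∀ n, 0 ≤ X n := fun n => (hXpos n).le
  set S7 : ℝ := ∑' n, X n * |l n - l (n + 1)| with hS7def
  have hS7 : ∀ A : Finset ℕ, ∑ j ∈ A, X j * |l j - l (j + 1)| ≤ S7 :=
    fun A => Summable.sum_le_tsum A (fun i _ => mul_nonneg (hXnn i) (abs_nonneg _)) h7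
  have hl : ∀ m : ℕ, |l m| * X m ≤ C1 := by
    intro m
    have h := hC1 m
    rwa [abs_mul, abs_of_pos (hXpos m)] at h
  -- the four genBound applications
  have ha4 : ∀ v, 0 ≤ (p v / P v) * |t v| :=
    fun v => mul_nonneg (div_nonneg (hp v).le (hPpos v).le) (abs_nonneg _)
  have ha5 : ∀ v, 0 ≤ |t v| / (v : ℝ) :=
    fun v => div_nonneg (abs_nonneg _) (Nat.cast_nonneg v)
  have hDl : ∀ m, 1 ≤ m →
      (∑ j ∈ Finset.Icc 1 (m - 1), abs (|l j| - |l (j + 1)|) * X j) + |l m| * X m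
        ≤ S7 + C1 := by
    intro m _
    have hsum : ∑ j ∈ Finset.Icc 1 (m - 1), abs (|l j| - |l (j + 1)|) * X j
        ≤ ∑ j ∈ Finset.Icc 1 (m - 1), X j * |l j - l (j + 1)| := by
      apply Finset.sum_le_sum
      intro j _
      rw [mul_comm (X j)]
      exact mul_le_mul_of_nonneg_right (abs_abs_sub_abs_le_abs_sub _ _) (hXnn j)
    have h2 := hS7 (Finset.Icc 1 (m - 1))
    have h3 := hl m
    linarith
  have hD3 : ∀ m, 1 ≤ m →
      (∑ j ∈ Finset.Icc 1 (m - 1), abs (|l (j + 1)| - |l (j + 1 + 1)|) * X j) + |l (m + 1)| * X m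
        ≤ S7 + C2 + C1 + C6 := by
    intro m hm
    have hsum : ∑ j ∈ Finset.Icc 1 (m - 1), abs (|l (j + 1)| - |l (j + 1 + 1)|) * X j
        ≤ (∑ j ∈ Finset.Icc 1 (m - 1), X j * |l j - l (j + 1)|)
          + ∑ j ∈ Finset.Icc 1 (m - 1),
              (j : ℝ) * X j * |(l j - l (j + 1)) - (l (j + 1) - l (j + 2))| := by
      rw [← Finset.sum_add_distrib]
      apply Finset.sum_le_sum
      intro j hj
      simp only [Finset.mem_Icc] at hj
      have hj1 : (1 : ℝ) ≤ (j : ℝ) := by exact_mod_cast hj.1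
      have e1 : abs (|l (j + 1)| - |l (j + 1 + 1)|) ≤ |l (j + 1) - l (j + 1 + 1)| :=
        abs_abs_sub_abs_le_abs_sub _ _
      have e2 : |l (j + 1) - l (j + 2)|
          ≤ |l j - l (j + 1)| + |(l j - l (j + 1)) - (l (j + 1) - l (j + 2))| := by
        have h := abs_sub (l j - l (j + 1)) ((l j - l (j + 1)) - (l (j + 1) - l (j + 2)))
        have heq : (l j - l (j + 1)) - ((l j - l (j + 1)) - (l (j + 1) - l (j + 2)))
            = l (j + 1) - l (j + 2) := by ring
        rw [heq] at h
        exact h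
      have e3 : X j * |(l j - l (j + 1)) - (l (j + 1) - l (j + 2))|
          ≤ (j : ℝ) * X j * |(l j - l (j + 1)) - (l (j + 1) - l (j + 2))| := by
        nlinarith [mul_nonneg (mul_nonneg (sub_nonneg.mpr hj1) (hXnn j))
          (abs_nonneg ((l j - l (j + 1)) - (l (j + 1) - l (j + 2))))]
      have e4 : abs (|l (j + 1)| - |l (j + 1 + 1)|) * X j
          ≤ (|l j - l (j + 1)| + |(l j - l (j + 1)) - (l (j + 1) - l (j + 2))|) * X j := by
        have : (j : ℕ) + 1 + 1 = (j : ℕ) + 2 := by ring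
        apply mul_le_mul_of_nonneg_right _ (hXnn j)
        calc abs (|l (j + 1)| - |l (j + 1 + 1)|) ≤ |l (j + 1) - l (j + 1 + 1)| := e1
          _ ≤ |l j - l (j + 1)| + |(l j - l (j + 1)) - (l (j + 1) - l (j + 2))| := by
              have h112 : j + 1 + 1 = j + 2 := by omega
              rw [h112]; exact e2
      nlinarith [e4, hXpos j]
    have h2 := hS7 (Finset.Icc 1 (m - 1))
    have h3 := hC2 (m - 1)
    have htail : |l (m + 1)| * X m ≤ C1 + C6 := by
      have e : |l (m + 1)| ≤ |l m| + |l m - l (m + 1)| := by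
        have h := abs_sub (l m) (l m - l (m + 1))
        have heq : l m - (l m - l (m + 1)) = l (m + 1) := by ring
        rw [heq] at h
        exact h
      have hm1 : (1 : ℝ) ≤ (m : ℝ) := by exact_mod_cast hm
      have h6m := hC6 m
      have e5 : |l (m + 1)| * X m ≤ (|l m| + |l m - l (m + 1)|) * X m :=
        mul_le_mul_of_nonneg_right e (hXnn m)
      have e6 : |l m - l (m + 1)| * X m ≤ (m : ℝ) * X m * |l m - l (m + 1)| := by
        nlinarith [mul_nonneg (mul_nonneg (sub_nonneg.mpr hm1) (hXnn m))
          (abs_nonneg (l m - l (m + 1)))]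
      nlinarith [hl m]
    linarith
  have hD2 : ∀ m, 1 ≤ m →
      (∑ j ∈ Finset.Icc 1 (m - 1),
          abs (((j : ℕ) : ℝ) * |l j - l (j + 1)| - ((j + 1 : ℕ) : ℝ) * |l (j + 1) - l (j + 1 + 1)|) * X j)
        + ((m : ℕ) : ℝ) * |l m - l (m + 1)| * X m ≤ 2 * C2 + S7 + C6 := by
    intro m hm
    have hsum : ∑ j ∈ Finset.Icc 1 (m - 1),
          abs (((j : ℕ) : ℝ) * |l j - l (j + 1)|
            - ((j + 1 : ℕ) : ℝ) * |l (j + 1) - l (j + 1 + 1)|) * X j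
        ≤ (∑ j ∈ Finset.Icc 1 (m - 1),
            2 * ((j : ℝ) * X j * |(l j - l (j + 1)) - (l (j + 1) - l (j + 2))|))
          + ∑ j ∈ Finset.Icc 1 (m - 1), X j * |l j - l (j + 1)| := by
      rw [← Finset.sum_add_distrib]
      apply Finset.sum_le_sum
      intro j hj
      simp only [Finset.mem_Icc] at hj
      have hj1 : (1 : ℝ) ≤ (j : ℝ) := by exact_mod_cast hj.1
      have h112 : j + 1 + 1 = j + 2 := by omega
      rw [h112]
      set A := l j - l (j + 1) with hA
      set B := l (j + 1) - l (j + 2) with hB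
      push_cast
      -- goal : |j * |A| - (j+1) * |B|| * X j ≤ 2 * (j * X j * |A - B|) + X j * |A|
      have e1 : abs ((j : ℝ) * |A| - ((j : ℝ) + 1) * |B|)
          ≤ (j : ℝ) * abs (|A| - |B|) + |B| := by
        have : (j : ℝ) * |A| - ((j : ℝ) + 1) * |B| = (j : ℝ) * (|A| - |B|) - |B| := by ring
        rw [this]
        have h := abs_sub ((j : ℝ) * (|A| - |B|)) (|B|)
        have heq : abs ((j : ℝ) * (|A| - |B|)) = (j : ℝ) * abs (|A| - |B|) := by
          rw [abs_mul, Nat.abs_cast]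
        rw [heq, abs_abs] at h
        exact h
      have e2 : abs (|A| - |B|) ≤ |A - B| := abs_abs_sub_abs_le_abs_sub _ _
      have e3 : |B| ≤ |A| + |A - B| := by
        have h := abs_sub A (A - B)
        have heq : A - (A - B) = B := by ring
        rw [heq] at h
        exact h
      have e4 : (j : ℝ) * abs (|A| - |B|) + |B| ≤ (j : ℝ) * |A - B| + (|A| + |A - B|) := by
        have := mul_le_mul_of_nonneg_left e2 (by positivity : (0:ℝ) ≤ (j : ℝ))
        linarith
      have e5 := mul_le_mul_of_nonneg_right (e1.trans e4) (hXnn j)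
      have e6 : (0:ℝ) ≤ ((j : ℝ) - 1) * X j * |A - B| :=
        mul_nonneg (mul_nonneg (sub_nonneg.mpr hj1) (hXnn j)) (abs_nonneg (A - B))
      nlinarith [e5, e6]
    have h2 := hS7 (Finset.Icc 1 (m - 1))
    have h3 := hC2 (m - 1)
    have hmul : ∑ j ∈ Finset.Icc 1 (m - 1),
          2 * ((j : ℝ) * X j * |(l j - l (j + 1)) - (l (j + 1) - l (j + 2))|)
        ≤ 2 * C2 := by
      rw [← Finset.mul_sum]
      have := hC2 (m - 1)
      linarith
    have htail : ((m : ℕ) : ℝ) * |l m - l (m + 1)| * X m ≤ C6 := by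
      have := hC6 m
      nlinarith []
    linarith
  have L1 := genBound X (fun v => (p v / P v) * |t v|) (fun v => |l v|) C4 (S7 + C1)
    hXpos ha4 (fun v => abs_nonneg _) hC4 hDl
  have L4 := genBound X (fun v => |t v| / (v : ℝ)) (fun v => |l v|) C5 (S7 + C1)
    hXpos ha5 (fun v => abs_nonneg _) hC5 hDl
  have L3 := genBound X (fun v => (p v / P v) * |t v|) (fun v => |l (v + 1)|) C4
    (S7 + C2 + C1 + C6) hXpos ha4 (fun v => abs_nonneg _) hC4 hD3
  have L2 := genBound X (fun v => |t v| / (v : ℝ)) (fun v => (v : ℝ) * |l v - l (v + 1)|) C5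
    (2 * C2 + S7 + C6) hXpos ha5 (fun v => mul_nonneg (Nat.cast_nonneg v) (abs_nonneg _)) hC5 hD2
  -- telescoping facts
  have hq : ∀ n, p (n + 1) / (P (n + 1) * P n) = 1 / P n - 1 / P (n + 1) := by
    intro n
    have h1 := (hPpos n).ne'
    have h2 : P n + p (n + 1) ≠ 0 := by rw [← hPsucc n]; exact (hPpos (n + 1)).ne'
    rw [hPsucc n]
    field_simp
    try ring
    try tauto
  have hqsum : ∀ a b : ℕ, ∑ n ∈ Finset.Icc a b, p (n + 1) / (P (n + 1) * P n) ≤ 1 / P a := by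
    intro a b
    rcases le_or_gt a (b + 1) with hab | hab
    · have e : ∑ n ∈ Finset.Icc a b, p (n + 1) / (P (n + 1) * P n)
          = ∑ n ∈ Finset.Icc a b, ((fun k => 1 / P k) n - (fun k => 1 / P k) (n + 1)) := by
        apply Finset.sum_congr rfl
        intro n _
        exact hq n
      rw [e, telescope _ a b hab]
      have : 0 < 1 / P (b + 1) := by
        have := hPpos (b + 1); positivity
      linarith
    · rw [Finset.Icc_eq_empty (by omega)]
      simp
      have := hPpos a
      positivity
  -- key identities
  have key1 : ∀ n, P n * s (n + 1) - (∑ v ∈ Finset.range (n + 1), p v * s v)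
      = ∑ j ∈ Finset.Icc 1 (n + 1), P (j - 1) * (f j * l j) := by
    intro n
    induction n with
    | zero =>
        have hs1 : s 1 = s 0 + f 1 * l 1 := by
          rw [hs 1, hs 0, Finset.sum_range_succ]
        have hP0 : P 0 = p 0 := by rw [hP]; simp
        simp only [Finset.Icc_self, Finset.sum_singleton, Finset.sum_range_one]
        norm_num
        rw [hs1, hP0]
        ring
    | succ n ih =>
        rw [Finset.sum_range_succ, Finset.sum_Icc_succ_top (by omega : 1 ≤ n + 1 + 1), ← ih]
        have hsn : s (n + 2) = s (n + 1) + f (n + 2) * l (n + 2) := by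
          rw [hs (n + 2), hs (n + 1), Finset.sum_range_succ]
        have hPn1 : P (n + 1) = P n + p (n + 1) := hPsucc n
        simp only [Nat.add_sub_cancel]
        rw [hsn, hPn1]
        ring
  have key2 : ∀ n, T (n + 1) - T n
      = (p (n + 1) / (P (n + 1) * P n))
        * (P n * s (n + 1) - ∑ v ∈ Finset.range (n + 1), p v * s v) := by
    intro n
    rw [hT (n + 1), hT n, Finset.sum_range_succ]
    have h1 := (hPpos n).ne'
    have h2 := (hPpos (n + 1)).ne'
    have h3 := hPsucc n
    rw [h3] at h2 ⊢
    field_simp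
    ring
  have key3 : ∀ n, ∑ j ∈ Finset.Icc 1 (n + 1), P (j - 1) * (l j * (t j - t (j - 1)))
      = P n * (l (n + 1) * t (n + 1))
        + ∑ v ∈ Finset.Icc 1 n, (P (v - 1) * l v - P v * l (v + 1)) * t v := by
    intro n
    induction n with
    | zero =>
        rw [show Finset.Icc 1 0 = ∅ by rfl]
        simp only [Finset.Icc_self, Finset.sum_singleton, Finset.sum_empty,
          show (1:ℕ) - 1 = 0 from rfl, ht0]
        ring
    | succ n ih =>
        rw [Finset.sum_Icc_succ_top (by omega : 1 ≤ n + 1 + 1), ih,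
          Finset.sum_Icc_succ_top (by omega : 1 ≤ n + 1)]
        simp only [Nat.add_sub_cancel]
        ring
  have keyW : ∀ n, ∑ j ∈ Finset.Icc 1 (n + 1), P (j - 1) * (f j * l j)
      = (P n * (l (n + 1) * t (n + 1))
          + ∑ v ∈ Finset.Icc 1 n, (P (v - 1) * l v - P v * l (v + 1)) * t v)
        + ∑ j ∈ Finset.Icc 1 (n + 1), (P (j - 1) * (l j * t j)) / (j : ℝ) := by
    have ht' : ∀ n : ℕ, ((n : ℝ) + 1) * t n = ∑ r ∈ Finset.Icc 1 n, (r : ℝ) * f r := by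
      intro n
      rw [ht n]
      have hne : ((n : ℝ) + 1) ≠ 0 := by positivity
      field_simp
    have key4 : ∀ k : ℕ, f (k + 1) * l (k + 1)
        = l (k + 1) * (t (k + 1) - t k) + (l (k + 1) * t (k + 1)) / ((k : ℝ) + 1) := by
      intro k
      have e1 := ht' (k + 1)
      have e2 := ht' k
      rw [Finset.sum_Icc_succ_top (by omega : 1 ≤ k + 1), ← e2] at e1
      push_cast at e1
      have hk : ((k : ℝ) + 1) ≠ 0 := by positivity
      have hf : f (k + 1) = t (k + 1) - t k + t (k + 1) / ((k : ℝ) + 1) := by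
        field_simp
        linear_combination (-1 : ℝ) * e1
      rw [hf]
      ring
    intro n
    rw [← key3 n, ← Finset.sum_add_distrib]
    apply Finset.sum_congr rfl
    intro j hj
    simp only [Finset.mem_Icc] at hj
    obtain ⟨k, rfl⟩ : ∃ k, j = k + 1 := ⟨j - 1, by omega⟩
    rw [key4 k]
    simp only [Nat.add_sub_cancel]
    push_cast
    ring
  have bound_n : ∀ n, |T (n + 1) - T n|
      ≤ (p (n + 1) / (P (n + 1) * P n)) * (P n * (|l (n + 1)| * |t (n + 1)|))
        + (p (n + 1) / (P (n + 1) * P n)) * (∑ v ∈ Finset.Icc 1 n,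
            (P (v - 1) * |l v - l (v + 1)| + p v * |l (v + 1)|) * |t v|)
        + (p (n + 1) / (P (n + 1) * P n)) * (∑ j ∈ Finset.Icc 1 (n + 1),
            (P (j - 1) * (|l j| * |t j|)) / (j : ℝ)) := by
    intro n
    rw [key2 n, key1 n, keyW n]
    have hqnn : 0 ≤ p (n + 1) / (P (n + 1) * P n) := by
      have := hPpos n; have := hPpos (n + 1); have := hp (n + 1); positivity
    rw [abs_mul, abs_of_nonneg hqnn, ← mul_add, ← mul_add]
    apply mul_le_mul_of_nonneg_left _ hqnn
    calc |(P n * (l (n + 1) * t (n + 1))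
            + ∑ v ∈ Finset.Icc 1 n, (P (v - 1) * l v - P v * l (v + 1)) * t v)
          + ∑ j ∈ Finset.Icc 1 (n + 1), (P (j - 1) * (l j * t j)) / (j : ℝ)|
        ≤ |P n * (l (n + 1) * t (n + 1))
            + ∑ v ∈ Finset.Icc 1 n, (P (v - 1) * l v - P v * l (v + 1)) * t v|
          + |∑ j ∈ Finset.Icc 1 (n + 1), (P (j - 1) * (l j * t j)) / (j : ℝ)| := abs_add_le _ _
      _ ≤ (|P n * (l (n + 1) * t (n + 1))|
            + |∑ v ∈ Finset.Icc 1 n, (P (v - 1) * l v - P v * l (v + 1)) * t v|)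
          + |∑ j ∈ Finset.Icc 1 (n + 1), (P (j - 1) * (l j * t j)) / (j : ℝ)| := by
          have := abs_add_le (P n * (l (n + 1) * t (n + 1)))
            (∑ v ∈ Finset.Icc 1 n, (P (v - 1) * l v - P v * l (v + 1)) * t v)
          linarith
      _ ≤ P n * (|l (n + 1)| * |t (n + 1)|)
          + (∑ v ∈ Finset.Icc 1 n,
              (P (v - 1) * |l v - l (v + 1)| + p v * |l (v + 1)|) * |t v|)
          + ∑ j ∈ Finset.Icc 1 (n + 1), (P (j - 1) * (|l j| * |t j|)) / (j : ℝ) := by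
          apply add_le_add (add_le_add ?_ ?_) ?_
          · rw [abs_mul, abs_mul, abs_of_pos (hPpos n)]
          · calc |∑ v ∈ Finset.Icc 1 n, (P (v - 1) * l v - P v * l (v + 1)) * t v|
                ≤ ∑ v ∈ Finset.Icc 1 n, |(P (v - 1) * l v - P v * l (v + 1)) * t v| :=
                  Finset.abs_sum_le_sum_abs _ _
              _ ≤ ∑ v ∈ Finset.Icc 1 n,
                    (P (v - 1) * |l v - l (v + 1)| + p v * |l (v + 1)|) * |t v| := by
                  apply Finset.sum_le_sum
                  intro v hv
                  simp only [Finset.mem_Icc] at hv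
                  obtain ⟨k, rfl⟩ : ∃ k, v = k + 1 := ⟨v - 1, by omega⟩
                  simp only [Nat.add_sub_cancel]
                  rw [abs_mul]
                  apply mul_le_mul_of_nonneg_right _ (abs_nonneg _)
                  have hd : P k * l (k + 1) - P (k + 1) * l (k + 1 + 1)
                      = P k * (l (k + 1) - l (k + 1 + 1)) - p (k + 1) * l (k + 1 + 1) := by
                    rw [hPsucc k]; ring
                  rw [hd]
                  calc |P k * (l (k + 1) - l (k + 1 + 1)) - p (k + 1) * l (k + 1 + 1)|
                      ≤ |P k * (l (k + 1) - l (k + 1 + 1))| + |p (k + 1) * l (k + 1 + 1)| :=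
                        abs_sub _ _
                    _ = P k * |l (k + 1) - l (k + 1 + 1)| + p (k + 1) * |l (k + 1 + 1)| := by
                        rw [abs_mul, abs_mul, abs_of_pos (hPpos k), abs_of_pos (hp (k + 1))]
          · calc |∑ j ∈ Finset.Icc 1 (n + 1), (P (j - 1) * (l j * t j)) / (j : ℝ)|
                ≤ ∑ j ∈ Finset.Icc 1 (n + 1), |(P (j - 1) * (l j * t j)) / (j : ℝ)| :=
                  Finset.abs_sum_le_sum_abs _ _
              _ = ∑ j ∈ Finset.Icc 1 (n + 1), (P (j - 1) * (|l j| * |t j|)) / (j : ℝ) := by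
                  apply Finset.sum_congr rfl
                  intro j hj
                  rw [abs_div, abs_mul, abs_mul, abs_of_pos (hPpos (j - 1)),
                    Nat.abs_cast]
  apply summable_of_sum_range_le (c := C4 * (S7 + C1) + (C5 * (2 * C2 + S7 + C6)
      + C4 * (S7 + C2 + C1 + C6)) + C5 * (S7 + C1)) (fun n => abs_nonneg _)
  intro m
  have split : ∑ n ∈ Finset.range m, |T (n + 1) - T n|
      ≤ (∑ n ∈ Finset.range m,
            (p (n + 1) / (P (n + 1) * P n)) * (P n * (|l (n + 1)| * |t (n + 1)|)))
        + (∑ n ∈ Finset.range m,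
            (p (n + 1) / (P (n + 1) * P n)) * (∑ v ∈ Finset.Icc 1 n,
              (P (v - 1) * |l v - l (v + 1)| + p v * |l (v + 1)|) * |t v|))
        + ∑ n ∈ Finset.range m,
            (p (n + 1) / (P (n + 1) * P n)) * (∑ j ∈ Finset.Icc 1 (n + 1),
              (P (j - 1) * (|l j| * |t j|)) / (j : ℝ)) := by
    rw [← Finset.sum_add_distrib, ← Finset.sum_add_distrib]
    exact Finset.sum_le_sum (fun n _ => bound_n n)
  have hSA : ∑ n ∈ Finset.range m,
        (p (n + 1) / (P (n + 1) * P n)) * (P n * (|l (n + 1)| * |t (n + 1)|))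
      ≤ C4 * (S7 + C1) := by
    have e : ∀ n : ℕ, (p (n + 1) / (P (n + 1) * P n)) * (P n * (|l (n + 1)| * |t (n + 1)|))
        = |l (n + 1)| * (p (n + 1) / P (n + 1) * |t (n + 1)|) := by
      intro n
      have h1 := (hPpos n).ne'
      have h2 := (hPpos (n + 1)).ne'
      field_simp
    calc ∑ n ∈ Finset.range m,
          (p (n + 1) / (P (n + 1) * P n)) * (P n * (|l (n + 1)| * |t (n + 1)|))
        = ∑ n ∈ Finset.range m, |l (n + 1)| * (p (n + 1) / P (n + 1) * |t (n + 1)|) :=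
          Finset.sum_congr rfl (fun n _ => e n)
      _ = ∑ k ∈ Finset.Icc 1 m, |l k| * (p k / P k * |t k|) :=
          sum_shift (fun k => |l k| * (p k / P k * |t k|)) m
      _ ≤ C4 * (S7 + C1) := L1 m
  have hSB : ∑ n ∈ Finset.range m,
        (p (n + 1) / (P (n + 1) * P n)) * (∑ v ∈ Finset.Icc 1 n,
          (P (v - 1) * |l v - l (v + 1)| + p v * |l (v + 1)|) * |t v|)
      ≤ C5 * (2 * C2 + S7 + C6) + C4 * (S7 + C2 + C1 + C6) := by
    calc ∑ n ∈ Finset.range m,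
          (p (n + 1) / (P (n + 1) * P n)) * (∑ v ∈ Finset.Icc 1 n,
            (P (v - 1) * |l v - l (v + 1)| + p v * |l (v + 1)|) * |t v|)
        = ∑ n ∈ Finset.range m, ∑ v ∈ Finset.Icc 1 n,
            (p (n + 1) / (P (n + 1) * P n))
              * ((P (v - 1) * |l v - l (v + 1)| + p v * |l (v + 1)|) * |t v|) :=
          Finset.sum_congr rfl (fun n _ => Finset.mul_sum _ _ _)
      _ = ∑ v ∈ Finset.Icc 1 (m - 1), ∑ n ∈ Finset.Icc v (m - 1),
            (p (n + 1) / (P (n + 1) * P n))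
              * ((P (v - 1) * |l v - l (v + 1)| + p v * |l (v + 1)|) * |t v|) := by
          refine Finset.sum_comm' ?_
          intro x y
          simp only [Finset.mem_range, Finset.mem_Icc]
          omega
      _ ≤ ∑ v ∈ Finset.Icc 1 (m - 1),
            (((v : ℝ) * |l v - l (v + 1)|) * (|t v| / (v : ℝ))
              + |l (v + 1)| * (p v / P v * |t v|)) := by
          apply Finset.sum_le_sum
          intro v hv
          simp only [Finset.mem_Icc] at hv
          obtain ⟨k, rfl⟩ : ∃ k, v = k + 1 := ⟨v - 1, by omega⟩
          simp only [Nat.add_sub_cancel]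
          rw [← Finset.sum_mul]
          have hgt : 0 ≤ (P k * |l (k + 1) - l (k + 1 + 1)| + p (k + 1) * |l (k + 1 + 1)|)
              * |t (k + 1)| := by
            have := (hPpos k).le
            have := (hp (k + 1)).le
            positivity
          have hq1 := hqsum (k + 1) (m - 1)
          calc (∑ n ∈ Finset.Icc (k + 1) (m - 1), p (n + 1) / (P (n + 1) * P n))
                * ((P k * |l (k + 1) - l (k + 1 + 1)| + p (k + 1) * |l (k + 1 + 1)|)
                  * |t (k + 1)|)
              ≤ (1 / P (k + 1))
                * ((P k * |l (k + 1) - l (k + 1 + 1)| + p (k + 1) * |l (k + 1 + 1)|)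
                  * |t (k + 1)|) := mul_le_mul_of_nonneg_right hq1 hgt
            _ = (P k / P (k + 1)) * (|l (k + 1) - l (k + 1 + 1)| * |t (k + 1)|)
                + |l (k + 1 + 1)| * (p (k + 1) / P (k + 1) * |t (k + 1)|) := by
                have h2 := (hPpos (k + 1)).ne'
                field_simp
            _ ≤ 1 * (|l (k + 1) - l (k + 1 + 1)| * |t (k + 1)|)
                + |l (k + 1 + 1)| * (p (k + 1) / P (k + 1) * |t (k + 1)|) := by
                have hPk : P k / P (k + 1) ≤ 1 := by
                  rw [div_le_one (hPpos (k + 1))]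
                  rw [hPsucc k]
                  have := (hp (k + 1)).le
                  linarith
                have : 0 ≤ |l (k + 1) - l (k + 1 + 1)| * |t (k + 1)| := by positivity
                nlinarith
            _ = ((k + 1 : ℕ) : ℝ) * |l (k + 1) - l (k + 1 + 1)| * (|t (k + 1)| / ((k + 1 : ℕ) : ℝ))
                + |l (k + 1 + 1)| * (p (k + 1) / P (k + 1) * |t (k + 1)|) := by
                have hk : ((k + 1 : ℕ) : ℝ) ≠ 0 := by positivity
                field_simp
      _ ≤ C5 * (2 * C2 + S7 + C6) + C4 * (S7 + C2 + C1 + C6) := by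
          rw [Finset.sum_add_distrib]
          exact add_le_add (L2 (m - 1)) (L3 (m - 1))
  have hSC : ∑ n ∈ Finset.range m,
        (p (n + 1) / (P (n + 1) * P n)) * (∑ j ∈ Finset.Icc 1 (n + 1),
          (P (j - 1) * (|l j| * |t j|)) / (j : ℝ))
      ≤ C5 * (S7 + C1) := by
    calc ∑ n ∈ Finset.range m,
          (p (n + 1) / (P (n + 1) * P n)) * (∑ j ∈ Finset.Icc 1 (n + 1),
            (P (j - 1) * (|l j| * |t j|)) / (j : ℝ))
        = ∑ n ∈ Finset.range m, ∑ j ∈ Finset.Icc 1 (n + 1),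
            (p (n + 1) / (P (n + 1) * P n)) * ((P (j - 1) * (|l j| * |t j|)) / (j : ℝ)) :=
          Finset.sum_congr rfl (fun n _ => Finset.mul_sum _ _ _)
      _ = ∑ j ∈ Finset.Icc 1 m, ∑ n ∈ Finset.Icc (j - 1) (m - 1),
            (p (n + 1) / (P (n + 1) * P n)) * ((P (j - 1) * (|l j| * |t j|)) / (j : ℝ)) := by
          refine Finset.sum_comm' ?_
          intro x y
          simp only [Finset.mem_range, Finset.mem_Icc]
          omega
      _ ≤ ∑ j ∈ Finset.Icc 1 m, |l j| * (|t j| / (j : ℝ)) := by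
          apply Finset.sum_le_sum
          intro j hj
          simp only [Finset.mem_Icc] at hj
          rw [← Finset.sum_mul]
          have hgt : 0 ≤ (P (j - 1) * (|l j| * |t j|)) / (j : ℝ) := by
            have := (hPpos (j - 1)).le
            positivity
          have hq1 := hqsum (j - 1) (m - 1)
          calc (∑ n ∈ Finset.Icc (j - 1) (m - 1), p (n + 1) / (P (n + 1) * P n))
                * ((P (j - 1) * (|l j| * |t j|)) / (j : ℝ))
              ≤ (1 / P (j - 1)) * ((P (j - 1) * (|l j| * |t j|)) / (j : ℝ)) :=
                mul_le_mul_of_nonneg_right hq1 hgt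
            _ = |l j| * (|t j| / (j : ℝ)) := by
                have h1 := (hPpos (j - 1)).ne'
                have hjne : ((j : ℕ) : ℝ) ≠ 0 := by
                  have : (0 : ℝ) < (j : ℝ) := by exact_mod_cast hj.1
                  linarith
                field_simp
      _ ≤ C5 * (S7 + C1) := L4 m
  linarith
end

section
/- Suppose (X_n) is positive, k ≥ 1, and the sequences satisfy: ∑_{r=1}^{m} |t_r|^k/(r X_r^{k−1}) = O(X_m), ∑_{v=1}^{m} v X_v |Δ²λ_v| = O(1), ∑_{v=1}^m X_v |Δλ_v| = O(1), and m X_m |Δλ_m| = O(1). Then ∑_{v=1}^{m} |Δλ_v| |t_v|^k / X_v^{k−1} = O(1) as m → ∞. -/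
open Finset

/-- Abel summation identity. -/
lemma abel_aux_dlw (a S : ℕ → ℝ) (hS0 : S 0 = 0) (m : ℕ) :
    ∑ v ∈ Finset.Icc 1 m, a v * (S v - S (v - 1)) =
      (∑ v ∈ Finset.Icc 1 m, (a v - a (v + 1)) * S v) + a (m + 1) * S m := by
  induction m with
  | zero => simp [hS0]
  | succ n ih =>
    rw [Finset.sum_Icc_succ_top (by omega : 1 ≤ n + 1),
        Finset.sum_Icc_succ_top (by omega : 1 ≤ n + 1), ih]
    simp only [Nat.add_sub_cancel]
    ring

/-- Abel summation bound: ∑ |Δλ_v| |t_v|^k / X_v^{k−1} = O(1). -/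
theorem delta_lambda_weighted_sum_bounded
    (k : ℝ) (hk : 1 ≤ k)
    (X : ℕ → ℝ) (hXpos : ∀ n, 0 < X n)
    (l t : ℕ → ℝ)
    (h1 : ∃ C : ℝ, ∀ m : ℕ,
      ∑ r ∈ Finset.Icc 1 m, |t r| ^ k / ((r : ℝ) * X r ^ (k - 1)) ≤ C * X m)
    (h2 : ∃ C : ℝ, ∀ m : ℕ,
      ∑ v ∈ Finset.Icc 1 m,
        (v : ℝ) * X v * |(l v - l (v + 1)) - (l (v + 1) - l (v + 2))| ≤ C)
    (h3 : ∃ C : ℝ, ∀ m : ℕ, ∑ v ∈ Finset.Icc 1 m, X v * |l v - l (v + 1)| ≤ C)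
    (h4 : ∃ C : ℝ, ∀ m : ℕ, (m : ℝ) * X m * |l m - l (m + 1)| ≤ C) :
    ∃ C : ℝ, ∀ m : ℕ,
      ∑ v ∈ Finset.Icc 1 m, |l v - l (v + 1)| * |t v| ^ k / X v ^ (k - 1) ≤ C := by
  obtain ⟨C1, h1⟩ := h1
  obtain ⟨C2, h2⟩ := h2
  obtain ⟨C3, h3⟩ := h3
  obtain ⟨C4, h4⟩ := h4
  classical
  set D : ℕ → ℝ := fun v => l v - l (v + 1) with hDdef
  have h2' : ∀ m : ℕ, ∑ v ∈ Finset.Icc 1 m, (v : ℝ) * X v * |D v - D (v + 1)| ≤ C2 := h2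
  have h3' : ∀ m : ℕ, ∑ v ∈ Finset.Icc 1 m, X v * |D v| ≤ C3 := h3
  have h4' : ∀ m : ℕ, (m : ℝ) * X m * |D m| ≤ C4 := h4
  set S : ℕ → ℝ := fun m => ∑ r ∈ Finset.Icc 1 m, |t r| ^ k / ((r : ℝ) * X r ^ (k - 1))
    with hSdef
  have hS0 : S 0 = 0 := by simp [hSdef]
  have hSnn : ∀ m, 0 ≤ S m := by
    intro m
    apply Finset.sum_nonneg
    intro r hr
    have hr1 : 1 ≤ r := (Finset.mem_Icc.mp hr).1
    have hrpos : (0 : ℝ) < (r : ℝ) := by exact_mod_cast hr1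
    have := hXpos r
    positivity
  have hSle : ∀ m, S m ≤ C1 * X m := h1
  have hC1 : 0 ≤ C1 := by
    by_contra h
    push_neg at h
    have h0 : (0 : ℝ) ≤ C1 * X 0 := hS0 ▸ hSle 0
    nlinarith [hXpos 0]
  have hC2 : 0 ≤ C2 := by simpa using h2' 0
  have hC3 : 0 ≤ C3 := by simpa using h3' 0
  have hC4 : 0 ≤ C4 := by simpa using h4' 0
  -- the Abel coefficients
  set a : ℕ → ℝ := fun v => (v : ℝ) * |D v| with hadef
  have habs : ∀ v : ℕ, 1 ≤ v → |a v - a (v + 1)| ≤ 2 * v * |D v - D (v + 1)| + |D v| := by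
    intro v hv
    have hv1 : (1 : ℝ) ≤ (v : ℝ) := by exact_mod_cast hv
    have heq : a v - a (v + 1) = ((v : ℝ) + 1) * (|D v| - |D (v + 1)|) - |D v| := by
      simp only [hadef]
      push_cast
      ring
    have hAB : abs (|D v| - |D (v + 1)|) ≤ |D v - D (v + 1)| :=
      abs_abs_sub_abs_le_abs_sub _ _
    have h0 : abs (a v - a (v + 1)) ≤
        ((v : ℝ) + 1) * abs (|D v| - |D (v + 1)|) + |D v| := by
      rw [heq]
      refine (abs_sub _ _).trans ?_
      rw [abs_mul, abs_abs, abs_of_nonneg (by linarith : (0:ℝ) ≤ (v : ℝ) + 1)]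
    nlinarith [abs_nonneg (D v - D (v + 1)), abs_nonneg (|D v| - |D (v + 1)|)]
  have hSdiff : ∀ v : ℕ, 1 ≤ v →
      S v - S (v - 1) = |t v| ^ k / ((v : ℝ) * X v ^ (k - 1)) := by
    intro v hv
    obtain ⟨w, rfl⟩ : ∃ w, v = w + 1 := ⟨v - 1, by omega⟩
    have : S (w + 1) = S w + |t (w + 1)| ^ k / (((w + 1 : ℕ) : ℝ) * X (w + 1) ^ (k - 1)) := by
      simp only [hSdef]
      rw [Finset.sum_Icc_succ_top (by omega : 1 ≤ w + 1)]
    rw [this]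
    simp
  refine ⟨4 * C1 * C2 + 2 * C1 * C3 + C1 * C4, fun m => ?_⟩
  match m with
  | 0 => simp; positivity
  | (n + 1 : ℕ) =>
    set m := n + 1 with hm
    have hm1 : 1 ≤ m := by omega
    have hmem : m ∈ Finset.Icc 1 m := Finset.mem_Icc.mpr ⟨hm1, le_refl m⟩
    have hterm : ∀ v ∈ Finset.Icc 1 m,
        |l v - l (v + 1)| * |t v| ^ k / X v ^ (k - 1) = a v * (S v - S (v - 1)) := by
      intro v hv
      have hv1 : 1 ≤ v := (Finset.mem_Icc.mp hv).1
      rw [hSdiff v hv1]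
      have hvpos : (0 : ℝ) < (v : ℝ) := by exact_mod_cast hv1
      have hXv : (0 : ℝ) < X v ^ (k - 1) := Real.rpow_pos_of_pos (hXpos v) _
      simp only [hadef, hDdef]
      field_simp
    rw [Finset.sum_congr rfl hterm, abel_aux_dlw a S hS0 m]
    have hsum1 : ∑ v ∈ Finset.Icc 1 m, (a v - a (v + 1)) * S v ≤
        2 * C1 * C2 + C1 * C3 := by
      have step : ∑ v ∈ Finset.Icc 1 m, (a v - a (v + 1)) * S v ≤
          ∑ v ∈ Finset.Icc 1 m, (2 * v * |D v - D (v + 1)| + |D v|) * (C1 * X v) := by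
        apply Finset.sum_le_sum
        intro v hv
        have hv1 : 1 ≤ v := (Finset.mem_Icc.mp hv).1
        calc (a v - a (v + 1)) * S v ≤ |a v - a (v + 1)| * S v :=
              mul_le_mul_of_nonneg_right (le_abs_self _) (hSnn v)
          _ ≤ (2 * v * |D v - D (v + 1)| + |D v|) * S v :=
              mul_le_mul_of_nonneg_right (habs v hv1) (hSnn v)
          _ ≤ (2 * v * |D v - D (v + 1)| + |D v|) * (C1 * X v) := by
              apply mul_le_mul_of_nonneg_left (hSle v)
              positivity
      have e : ∑ v ∈ Finset.Icc 1 m, (2 * v * |D v - D (v + 1)| + |D v|) * (C1 * X v)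
          = 2 * C1 * (∑ v ∈ Finset.Icc 1 m, (v : ℝ) * X v * |D v - D (v + 1)|)
            + C1 * (∑ v ∈ Finset.Icc 1 m, X v * |D v|) := by
        rw [Finset.mul_sum, Finset.mul_sum, ← Finset.sum_add_distrib]
        exact Finset.sum_congr rfl fun v _ => by ring
      calc ∑ v ∈ Finset.Icc 1 m, (a v - a (v + 1)) * S v
          ≤ 2 * C1 * (∑ v ∈ Finset.Icc 1 m, (v : ℝ) * X v * |D v - D (v + 1)|)
            + C1 * (∑ v ∈ Finset.Icc 1 m, X v * |D v|) := e ▸ step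
        _ ≤ 2 * C1 * C2 + C1 * C3 := by
            have := h2' m
            have := h3' m
            nlinarith
    have hsum2 : a (m + 1) * S m ≤ 2 * C1 * C2 + C1 * C3 + C1 * C4 := by
      have hsplit : a (m + 1) * S m = (a (m + 1) - a m) * S m + a m * S m := by ring
      have hb1 : (a (m + 1) - a m) * S m ≤ (2 * m * |D m - D (m + 1)| + |D m|) * (C1 * X m) := by
        calc (a (m + 1) - a m) * S m ≤ |a (m + 1) - a m| * S m :=
              mul_le_mul_of_nonneg_right (le_abs_self _) (hSnn m)
          _ = |a m - a (m + 1)| * S m := by rw [abs_sub_comm]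
          _ ≤ (2 * m * |D m - D (m + 1)| + |D m|) * S m :=
              mul_le_mul_of_nonneg_right (habs m hm1) (hSnn m)
          _ ≤ (2 * m * |D m - D (m + 1)| + |D m|) * (C1 * X m) := by
              apply mul_le_mul_of_nonneg_left (hSle m)
              positivity
      have hs2 : (m : ℝ) * X m * |D m - D (m + 1)| ≤ C2 := by
        refine le_trans (Finset.single_le_sum (f := fun (v : ℕ) => (v : ℝ) * X v * |D v - D (v + 1)|)
          (fun v hv => ?_) hmem) (h2' m)
        have hv1 : 1 ≤ v := (Finset.mem_Icc.mp hv).1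
        have : (0 : ℝ) ≤ (v : ℝ) := by positivity
        have := (hXpos v).le
        positivity
      have hs3 : X m * |D m| ≤ C3 := by
        refine le_trans (Finset.single_le_sum (f := fun v => X v * |D v|)
          (fun v hv => ?_) hmem) (h3' m)
        have := (hXpos v).le
        positivity
      have hb1' : (2 * m * |D m - D (m + 1)| + |D m|) * (C1 * X m) ≤ 2 * C1 * C2 + C1 * C3 := by
        have e : (2 * m * |D m - D (m + 1)| + |D m|) * (C1 * X m)
            = 2 * C1 * ((m : ℝ) * X m * |D m - D (m + 1)|) + C1 * (X m * |D m|) := by ring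
        rw [e]
        nlinarith
      have hb2 : a m * S m ≤ C1 * C4 := by
        have han : 0 ≤ a m := by
          simp only [hadef]
          positivity
        calc a m * S m ≤ a m * (C1 * X m) := mul_le_mul_of_nonneg_left (hSle m) han
          _ = C1 * ((m : ℝ) * X m * |D m|) := by simp only [hadef]; ring
          _ ≤ C1 * C4 := mul_le_mul_of_nonneg_left (h4' m) hC1
      linarith [hb1.trans hb1']
    linarith
end

section
/- If the sequence of partial sums ∑_{n=1}^m n X_n |Δ²λ_n| is bounded and (X_n) is positive and bounded below by a positive constant, then ∑_{n=1}^{∞} n |Δ²λ_n| converges, and consequently (Δλ_n) converges; if additionally λ_n X_n is bounded and X_n → ∞, then λ_n → 0. -/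
open Finset

/-- If ∑ n X_n |Δ²λ_n| has bounded partial sums, X is bounded below by a positive
    constant and X_n → ∞ with λ_n X_n bounded, then ∑ n|Δ²λ_n| converges,
    (Δλ_n) converges, and λ_n → 0. -/
theorem second_difference_summable_and_lambda_tendsto_zero
    (X : ℕ → ℝ) (hXpos : ∀ n, 0 < X n)
    (δ : ℝ) (hδ : 0 < δ) (hδX : ∀ n, δ ≤ X n)
    (hXtop : Filter.Tendsto X Filter.atTop Filter.atTop)
    (l : ℕ → ℝ)
    (h1 : ∃ C : ℝ, ∀ m : ℕ,
      ∑ n ∈ Finset.Icc 1 m,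
        (n : ℝ) * X n * |(l n - l (n + 1)) - (l (n + 1) - l (n + 2))| ≤ C)
    (h2 : ∃ C : ℝ, ∀ n : ℕ, |l n| * X n ≤ C) :
    Summable (fun n : ℕ => (n : ℝ) * |(l n - l (n + 1)) - (l (n + 1) - l (n + 2))|) ∧
    (∃ L : ℝ, Filter.Tendsto (fun n : ℕ => l n - l (n + 1)) Filter.atTop (nhds L)) ∧
    Filter.Tendsto l Filter.atTop (nhds 0) := by
  obtain ⟨C, hC⟩ := h1
  obtain ⟨D, hD⟩ := h2
  set a : ℕ → ℝ := fun n => (l n - l (n + 1)) - (l (n + 1) - l (n + 2)) with ha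
  -- Part 1: summability
  have hsum : Summable (fun n : ℕ => (n : ℝ) * |a n|) := by
    apply summable_of_sum_range_le (c := C / δ)
    · intro n; positivity
    · intro m
      have h0 : ∑ n ∈ Finset.range m, (n : ℝ) * |a n|
          = ∑ n ∈ Finset.Ico 1 m, (n : ℝ) * |a n| := by
        rw [Finset.range_eq_Ico]
        refine (Finset.sum_subset (Finset.Ico_subset_Ico (Nat.zero_le 1) le_rfl) ?_).symm
        intro x hx hx'
        have : x = 0 := by
          simp only [Finset.mem_Ico] at hx hx'
          omega
        simp [this]
      have h1 : ∑ n ∈ Finset.Ico 1 m, (n : ℝ) * |a n|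
          ≤ ∑ n ∈ Finset.Icc 1 m, (n : ℝ) * |a n| := by
        apply Finset.sum_le_sum_of_subset_of_nonneg Finset.Ico_subset_Icc_self
        intro i _ _; positivity
      have h2 : ∑ n ∈ Finset.Icc 1 m, (n : ℝ) * |a n|
          ≤ (1 / δ) * ∑ n ∈ Finset.Icc 1 m, (n : ℝ) * X n * |a n| := by
        rw [Finset.mul_sum]
        apply Finset.sum_le_sum
        intro i _
        rw [div_mul_eq_mul_div, le_div_iff₀ hδ]
        have : (i : ℝ) * |a i| * δ ≤ (i : ℝ) * |a i| * X i := by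
          apply mul_le_mul_of_nonneg_left (hδX i) (by positivity)
        calc (i : ℝ) * |a i| * δ ≤ (i : ℝ) * |a i| * X i := this
          _ = (i : ℝ) * X i * |a i| := by ring
          _ = 1 * ((i : ℝ) * X i * |a i|) := by ring
      calc ∑ n ∈ Finset.range m, (n : ℝ) * |a n|
          ≤ (1 / δ) * ∑ n ∈ Finset.Icc 1 m, (n : ℝ) * X n * |a n| := by
            rw [h0]; exact h1.trans h2
        _ ≤ (1 / δ) * C := by
            apply mul_le_mul_of_nonneg_left (hC m) (by positivity)
        _ = C / δ := by ring
  -- Part 3: λ → 0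
  have hl0 : Filter.Tendsto l Filter.atTop (nhds 0) := by
    have hdiv : Filter.Tendsto (fun n => D / X n) Filter.atTop (nhds 0) :=
      Filter.Tendsto.div_atTop tendsto_const_nhds hXtop
    apply squeeze_zero_norm _ hdiv
    intro n
    rw [Real.norm_eq_abs, le_div_iff₀ (hXpos n)]
    exact hD n
  refine ⟨hsum, ⟨0, ?_⟩, hl0⟩
  have h' : Filter.Tendsto (fun n : ℕ => l (n + 1)) Filter.atTop (nhds 0) :=
    hl0.comp (Filter.tendsto_add_atTop_nat 1)
  simpa using hl0.sub h'
end

section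
/- (Summability |A,p_n|_k of the diagonal term) Let k ≥ 1, (p_n) positive with P_n → ∞, and A a positive lower triangular matrix with a_{nn} = O(p_n/P_n). Suppose (X_n) is positive, ∑_{n=1}^{m} (p_n/P_n)|t_n|^k/X_n^{k−1} = O(X_m), ∑_{n=1}^∞ X_n|Δλ_n| < ∞, and λ_m X_m = O(1). Then ∑_{n=1}^{∞} (P_n/p_n)^{k−1} (a_{nn} |λ_n| |t_n|)^k < ∞. -/
open Finset

/-- Summability of the diagonal term: ∑ (P_n/p_n)^{k−1} (a_{nn}|λ_n||t_n|)^k < ∞. -/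
theorem diagonal_term_summable
    (k : ℝ) (hk : 1 ≤ k)
    (p : ℕ → ℝ) (hp : ∀ n, 0 < p n)
    (P : ℕ → ℝ) (hP : ∀ n, P n = ∑ i ∈ Finset.range (n + 1), p i)
    (hPtop : Filter.Tendsto P Filter.atTop Filter.atTop)
    (d : ℕ → ℝ) (hd : ∀ n, 0 ≤ d n)
    (hdO : ∃ C : ℝ, ∀ n : ℕ, d n ≤ C * (p n / P n))
    (X : ℕ → ℝ) (hXpos : ∀ n, 0 < X n)
    (t l : ℕ → ℝ)
    (h1 : ∃ C : ℝ, ∀ m : ℕ,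
      ∑ n ∈ Finset.Icc 1 m, (p n / P n) * |t n| ^ k / X n ^ (k - 1) ≤ C * X m)
    (h2 : Summable (fun n : ℕ => X n * |l n - l (n + 1)|))
    (h3 : ∃ C : ℝ, ∀ m : ℕ, |l m| * X m ≤ C) :
    Summable (fun n : ℕ => (P n / p n) ^ (k - 1) * (d n * |l n| * |t n|) ^ k) := by
  obtain ⟨C₁, hC₁⟩ := hdO
  obtain ⟨C₂, hC₂⟩ := h1
  obtain ⟨C₃, hC₃⟩ := h3
  have hPpos : ∀ n, 0 < P n := by
    intro n; rw [hP]
    exact Finset.sum_pos (fun i _ => hp i) (by simp)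
  have hC₁0 : 0 ≤ C₁ := by
    have h0 := le_trans (hd 0) (hC₁ 0)
    have := div_pos (hp 0) (hPpos 0)
    nlinarith
  have hC₃0 : 0 ≤ C₃ := le_trans (mul_nonneg (abs_nonneg _) (hXpos 0).le) (hC₃ 0)
  set a : ℕ → ℝ := fun n => (p n / P n) * |t n| ^ k / X n ^ (k - 1) with ha
  have hanonneg : ∀ n, 0 ≤ a n := fun n =>
    div_nonneg (mul_nonneg (div_pos (hp n) (hPpos n)).le
      (Real.rpow_nonneg (abs_nonneg _) _)) (Real.rpow_nonneg (hXpos n).le _)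
  have hSnonneg : ∀ m, 0 ≤ ∑ n ∈ Finset.Icc 1 m, a n :=
    fun m => Finset.sum_nonneg fun n _ => hanonneg n
  have hC₂0 : 0 ≤ C₂ := by
    have h0 := hC₂ 0
    simp at h0
    nlinarith [hXpos 0]
  -- Abel summation bound
  have key : ∀ j : ℕ, ∑ n ∈ Finset.Icc 1 (j+1), a n * |l n| ≤
      C₂ * ∑ n ∈ Finset.Icc 1 j, X n * |l n - l (n+1)| +
      (∑ n ∈ Finset.Icc 1 (j+1), a n) * |l (j+1)| := by
    intro j
    induction j with
    | zero => simp
    | succ j ih =>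
      have e1 : ∑ n ∈ Finset.Icc 1 (j+1+1), a n * |l n| =
          (∑ n ∈ Finset.Icc 1 (j+1), a n * |l n|) + a (j+1+1) * |l (j+1+1)| :=
        Finset.sum_Icc_succ_top (by omega) _
      have e2 : ∑ n ∈ Finset.Icc 1 (j+1+1), a n =
          (∑ n ∈ Finset.Icc 1 (j+1), a n) + a (j+1+1) :=
        Finset.sum_Icc_succ_top (by omega) _
      have e3 : ∑ n ∈ Finset.Icc 1 (j+1), X n * |l n - l (n+1)| =
          (∑ n ∈ Finset.Icc 1 j, X n * |l n - l (n+1)|) + X (j+1) * |l (j+1) - l (j+1+1)| :=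
        Finset.sum_Icc_succ_top (by omega) _
      rw [e1, e2, e3]
      have habs : |l (j+1)| - |l (j+1+1)| ≤ |l (j+1) - l (j+1+1)| :=
        abs_sub_abs_le_abs_sub _ _
      have hS := hSnonneg (j+1)
      have hSle : ∑ n ∈ Finset.Icc 1 (j+1), a n ≤ C₂ * X (j+1) := hC₂ (j+1)
      have hA := mul_le_mul_of_nonneg_left habs hS
      rw [mul_sub] at hA
      have hB := mul_le_mul_of_nonneg_right hSle (abs_nonneg (l (j+1) - l (j+1+1)))
      linarith
  have hT : ∀ j : ℕ, ∑ n ∈ Finset.Icc 1 j, X n * |l n - l (n+1)| ≤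
      ∑' n, X n * |l n - l (n+1)| := by
    intro j
    exact Summable.sum_le_tsum _ (fun n _ => mul_nonneg (hXpos n).le (abs_nonneg _)) h2
  set T := ∑' n, X n * |l n - l (n+1)| with hTdef
  have hT0 : 0 ≤ T := tsum_nonneg fun n => mul_nonneg (hXpos n).le (abs_nonneg _)
  have keybound : ∀ m : ℕ, ∑ n ∈ Finset.Icc 1 m, a n * |l n| ≤ C₂ * T + C₂ * C₃ := by
    intro m
    match m with
    | 0 =>
      simp only [show Finset.Icc 1 0 = (∅ : Finset ℕ) by rfl, Finset.sum_empty]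
      have := mul_nonneg hC₂0 hT0
      have := mul_nonneg hC₂0 hC₃0
      linarith
    | j+1 =>
      refine le_trans (key j) ?_
      have h5 : (∑ n ∈ Finset.Icc 1 (j+1), a n) * |l (j+1)| ≤ C₂ * C₃ := by
        calc (∑ n ∈ Finset.Icc 1 (j+1), a n) * |l (j+1)|
            ≤ (C₂ * X (j+1)) * |l (j+1)| :=
              mul_le_mul_of_nonneg_right (hC₂ (j+1)) (abs_nonneg _)
          _ = C₂ * (|l (j+1)| * X (j+1)) := by ring
          _ ≤ C₂ * C₃ := mul_le_mul_of_nonneg_left (hC₃ (j+1)) hC₂0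
      have h6 := mul_le_mul_of_nonneg_left (hT j) hC₂0
      linarith
  -- pointwise bound
  set K : ℝ := C₁ ^ k * C₃ ^ (k-1) with hK
  have hK0 : 0 ≤ K := mul_nonneg (Real.rpow_nonneg hC₁0 _) (Real.rpow_nonneg hC₃0 _)
  have point : ∀ n : ℕ, (P n / p n) ^ (k - 1) * (d n * |l n| * |t n|) ^ k ≤
      K * (a n * |l n|) := by
    intro n
    have hpP : 0 < p n / P n := div_pos (hp n) (hPpos n)
    have hPp : 0 < P n / p n := div_pos (hPpos n) (hp n)
    have hXk : 0 < X n ^ (k-1) := Real.rpow_pos_of_pos (hXpos n) _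
    have step1 : (d n * |l n| * |t n|) ^ k ≤
        (C₁ * (p n / P n) * |l n| * |t n|) ^ k := by
      apply Real.rpow_le_rpow
      · exact mul_nonneg (mul_nonneg (hd n) (abs_nonneg _)) (abs_nonneg _)
      · exact mul_le_mul_of_nonneg_right
          (mul_le_mul_of_nonneg_right (hC₁ n) (abs_nonneg _)) (abs_nonneg _)
      · linarith
    have step2 : (C₁ * (p n / P n) * |l n| * |t n|) ^ k =
        C₁ ^ k * (p n / P n) ^ k * |l n| ^ k * |t n| ^ k := by
      rw [Real.mul_rpow (by positivity) (abs_nonneg _),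
          Real.mul_rpow (by positivity) (abs_nonneg _),
          Real.mul_rpow hC₁0 hpP.le]
    have step3 : (P n / p n) ^ (k-1) * (p n / P n) ^ k = p n / P n := by
      have hinv : P n / p n = (p n / P n)⁻¹ := by
        field_simp
      rw [hinv, Real.inv_rpow hpP.le, inv_mul_eq_div, ← Real.rpow_sub hpP]
      norm_num
    have step4 : |l n| ^ k = |l n| ^ (k-1) * |l n| := by
      have : |l n| ^ ((k-1) + 1) = |l n| ^ (k-1) * |l n| ^ (1:ℝ) :=
        Real.rpow_add' (abs_nonneg _) (by linarith)
      simpa using this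
    have step5 : |l n| ^ (k-1) ≤ C₃ ^ (k-1) / X n ^ (k-1) := by
      rw [← Real.div_rpow hC₃0 (hXpos n).le]
      apply Real.rpow_le_rpow (abs_nonneg _) _ (by linarith)
      rw [le_div_iff₀ (hXpos n)]
      exact hC₃ n
    calc (P n / p n) ^ (k - 1) * (d n * |l n| * |t n|) ^ k
        ≤ (P n / p n) ^ (k-1) * (C₁ ^ k * (p n / P n) ^ k * |l n| ^ k * |t n| ^ k) := by
          rw [← step2]
          exact mul_le_mul_of_nonneg_left step1 (Real.rpow_nonneg hPp.le _)
      _ = ((P n / p n) ^ (k-1) * (p n / P n) ^ k) * C₁ ^ k * (|l n| ^ (k-1) * |l n|) * |t n| ^ k := by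
          rw [step4]; ring
      _ = C₁ ^ k * ((p n / P n) * |t n| ^ k * |l n| ^ (k-1)) * |l n| := by
          rw [step3]; ring
      _ ≤ C₁ ^ k * ((p n / P n) * |t n| ^ k * (C₃ ^ (k-1) / X n ^ (k-1))) * |l n| := by
          refine mul_le_mul_of_nonneg_right
            (mul_le_mul_of_nonneg_left
              (mul_le_mul_of_nonneg_left step5
                (mul_nonneg hpP.le (Real.rpow_nonneg (abs_nonneg _) _)))
              (Real.rpow_nonneg hC₁0 _)) (abs_nonneg _)
      _ = K * (a n * |l n|) := by
          simp only [hK, ha]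
          field_simp
  -- conclude summability
  have fnonneg : ∀ n : ℕ, 0 ≤ (P n / p n) ^ (k - 1) * (d n * |l n| * |t n|) ^ k := by
    intro n
    exact mul_nonneg (Real.rpow_nonneg (div_pos (hPpos n) (hp n)).le _)
      (Real.rpow_nonneg (mul_nonneg (mul_nonneg (hd n) (abs_nonneg _)) (abs_nonneg _)) _)
  set f : ℕ → ℝ := fun n => (P n / p n) ^ (k - 1) * (d n * |l n| * |t n|) ^ k with hf
  apply summable_of_sum_range_le (c := f 0 + K * (C₂ * T + C₂ * C₃)) fnonneg
  intro m
  have hsub : ∑ i ∈ Finset.range m, f i ≤ ∑ i ∈ Finset.Icc 0 m, f i := by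
    apply Finset.sum_le_sum_of_subset_of_nonneg
    · intro x hx; simp at hx ⊢; omega
    · intro i _ _; exact fnonneg i
  have hins : Finset.Icc 0 m = insert 0 (Finset.Icc 1 m) := by
    ext x; simp; omega
  have hbound : ∑ i ∈ Finset.Icc 1 m, f i ≤ K * (C₂ * T + C₂ * C₃) := by
    calc ∑ i ∈ Finset.Icc 1 m, f i ≤ ∑ i ∈ Finset.Icc 1 m, K * (a i * |l i|) :=
          Finset.sum_le_sum fun i _ => point i
      _ = K * ∑ i ∈ Finset.Icc 1 m, a i * |l i| := by rw [Finset.mul_sum]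
      _ ≤ K * (C₂ * T + C₂ * C₃) := mul_le_mul_of_nonneg_left (keybound m) hK0
  calc ∑ i ∈ Finset.range m, f i ≤ ∑ i ∈ Finset.Icc 0 m, f i := hsub
    _ = f 0 + ∑ i ∈ Finset.Icc 1 m, f i := by rw [hins, Finset.sum_insert (by simp)]
    _ ≤ f 0 + K * (C₂ * T + C₂ * C₃) := by linarith
end
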